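/- arXiv:2509.00421 — 5 statements merged into one kernel-verified Lean document; each statement's English description precedes it below -/
import Mathlib

section
/- Let d, m, m_p, k be positive integers and ε, r, L > 0 with ε ≤ L·r. Let τ : ℝ^{d×(m_p+m)} → ℝ^{d×(m_p+m)} satisfy ‖τ(Z) − τ(Z')‖_F ≤ L·‖Z − Z'‖_F for all Z, Z'. Fix inputs X^1, …, X^k ∈ ℝ^{d×m}. Suppose Y_1, …, Y_N ∈ (ℝ^{d×m})^k are pairwise 3ε-distinct, i.e., for all j ≠ j' there exists i ∈ {1,…,k} with ‖(Y_j)^i − (Y_{j'})^i‖_F > 3ε. Then the number of indices j such that Y_j is ε-accessible — i.e., such that there exists P ∈ ℝ^{d×m_p} with ‖P‖_F ≤ r and, for every i, the last m columns of τ([P, X^i]) are within Frobenius distance ε of (Y_j)^i — is at most (3Lr/ε)^{d·m_p}. -/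
/-- Frobenius norm of a `d × m` real matrix (represented as a function). -/
noncomputable def frob {d m : ℕ} (A : Fin d → Fin m → ℝ) : ℝ :=
  Real.sqrt (∑ i, ∑ j, (A i j) ^ 2)

/-- Horizontal concatenation `[A, B]` of two matrices with `d` rows. -/
def hcat {d m₁ m₂ : ℕ} (A : Fin d → Fin m₁ → ℝ) (B : Fin d → Fin m₂ → ℝ) :
    Fin d → Fin (m₁ + m₂) → ℝ :=
  fun i => Fin.append (A i) (B i)

/-- The last `m` columns of a `d × (mp + m)` matrix. -/
def lastCols {d mp m : ℕ} (Z : Fin d → Fin (mp + m) → ℝ) : Fin d → Fin m → ℝ :=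
  fun i j => Z i (Fin.natAdd mp j)

open Metric MeasureTheory Module
open scoped ENNReal

/-- Packing bound: a `δ`-separated finset in the ball of radius `R` of a
finite-dimensional real normed space has cardinality at most `((2R+δ)/δ)^dim`. -/
theorem my_card_le_of_separated {E : Type*} [NormedAddCommGroup E] [NormedSpace ℝ E]
    [FiniteDimensional ℝ E] (s : Finset E) {R δ : ℝ} (hδ : 0 < δ) (hR : 0 ≤ R)
    (hs : ∀ c ∈ s, ‖c‖ ≤ R)
    (h : ∀ c ∈ s, ∀ d ∈ s, c ≠ d → δ ≤ ‖c - d‖) :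
    (s.card : ℝ) ≤ ((2 * R + δ) / δ) ^ finrank ℝ E := by
  borelize E
  let μ : Measure E := Measure.addHaar
  have hδ2 : 0 < δ / 2 := by positivity
  have hρ : 0 < R + δ / 2 := by positivity
  set A := ⋃ c ∈ s, ball (c : E) (δ / 2) with hA
  have D : Set.Pairwise (s : Set E) (Function.onFun Disjoint fun c => ball (c : E) (δ / 2)) := by
    rintro c hc d hd hcd
    apply ball_disjoint_ball
    rw [dist_eq_norm]
    calc δ / 2 + δ / 2 = δ := by ring
      _ ≤ ‖c - d‖ := h c hc d hd hcd
  have A_subset : A ⊆ ball (0 : E) (R + δ / 2) := by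
    refine Set.iUnion₂_subset fun x hx => ?_
    apply ball_subset_ball'
    rw [dist_zero_right]
    linarith [hs x hx]
  have I :
      (s.card : ℝ≥0∞) * ENNReal.ofReal ((δ / 2) ^ finrank ℝ E) * μ (ball 0 1) ≤
        ENNReal.ofReal ((R + δ / 2) ^ finrank ℝ E) * μ (ball 0 1) :=
    calc
      (s.card : ℝ≥0∞) * ENNReal.ofReal ((δ / 2) ^ finrank ℝ E) * μ (ball 0 1) = μ A := by
        rw [hA, measure_biUnion_finset D fun c _ => measurableSet_ball]
        simp only [μ.addHaar_ball_of_pos _ hδ2]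
        simp only [Finset.sum_const, nsmul_eq_mul, mul_assoc]
      _ ≤ μ (ball (0 : E) (R + δ / 2)) := measure_mono A_subset
      _ = ENNReal.ofReal ((R + δ / 2) ^ finrank ℝ E) * μ (ball 0 1) := by
        simp only [μ.addHaar_ball_of_pos _ hρ]
  have J : (s.card : ℝ≥0∞) * ENNReal.ofReal ((δ / 2) ^ finrank ℝ E) ≤
      ENNReal.ofReal ((R + δ / 2) ^ finrank ℝ E) :=
    (ENNReal.mul_le_mul_iff_left (measure_ball_pos _ _ zero_lt_one).ne' measure_ball_lt_top.ne).1 I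
  have K : (s.card : ℝ) * (δ / 2) ^ finrank ℝ E ≤ (R + δ / 2) ^ finrank ℝ E := by
    have h1 := ENNReal.toReal_mono (ENNReal.ofReal_ne_top) J
    rw [ENNReal.toReal_mul, ENNReal.toReal_ofReal (by positivity),
      ENNReal.toReal_ofReal (by positivity)] at h1
    simpa using h1
  set n := finrank ℝ E
  rw [div_pow, le_div_iff₀ (pow_pos hδ n)]
  have h2 : (R + δ / 2) = (2 * R + δ) / 2 := by ring
  rw [h2, div_pow, div_pow] at K
  have h3 : (0:ℝ) < 2 ^ n := by positivity
  calc (s.card : ℝ) * δ ^ n = ((s.card : ℝ) * (δ ^ n / 2 ^ n)) * 2 ^ n := by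
        field_simp
    _ ≤ ((2 * R + δ) ^ n / 2 ^ n) * 2 ^ n := by
        exact mul_le_mul_of_nonneg_right K h3.le
    _ = (2 * R + δ) ^ n := by field_simp

noncomputable def toE {a b : ℕ} (A : Fin a → Fin b → ℝ) :
    EuclideanSpace ℝ (Fin a × Fin b) := WithLp.toLp 2 (fun p : Fin a × Fin b => A p.1 p.2)

lemma frob_eq_norm {a b : ℕ} (A : Fin a → Fin b → ℝ) : frob A = ‖toE A‖ := by
  rw [EuclideanSpace.norm_eq, frob]
  congr 1
  rw [Fintype.sum_prod_type]
  simp [toE, Real.norm_eq_abs, sq_abs]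

lemma toE_sub {a b : ℕ} (A B : Fin a → Fin b → ℝ) : toE (A - B) = toE A - toE B := rfl

lemma frob_sub_eq {a b : ℕ} (A B : Fin a → Fin b → ℝ) :
    frob (A - B) = ‖toE A - toE B‖ := by rw [frob_eq_norm, toE_sub]

lemma frob_lastCols_le {d mp m : ℕ} (Z : Fin d → Fin (mp + m) → ℝ) :
    frob (lastCols Z) ≤ frob Z := by
  apply Real.sqrt_le_sqrt
  apply Finset.sum_le_sum
  intro i _
  rw [Fin.sum_univ_add (f := fun j => (Z i j) ^ 2)]
  have h1 : (0:ℝ) ≤ ∑ j : Fin mp, (Z i (Fin.castAdd m j)) ^ 2 :=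
    Finset.sum_nonneg fun _ _ => sq_nonneg _
  have : ∑ j : Fin m, (lastCols Z i j) ^ 2 = ∑ j : Fin m, (Z i (Fin.natAdd mp j)) ^ 2 := rfl
  linarith

lemma frob_hcat_sub {d mp m : ℕ} (P P' : Fin d → Fin mp → ℝ) (X : Fin d → Fin m → ℝ) :
    frob (hcat P X - hcat P' X) = frob (P - P') := by
  unfold frob
  congr 1
  apply Finset.sum_congr rfl
  intro i _
  rw [Fin.sum_univ_add (f := fun j => ((hcat P X - hcat P' X) i j) ^ 2)]
  have h1 : ∀ j : Fin mp, (hcat P X - hcat P' X) i (Fin.castAdd m j) = (P - P') i j := by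
    intro j; simp [hcat, Fin.append_left]
  have h2 : ∀ j : Fin m, (hcat P X - hcat P' X) i (Fin.natAdd mp j) = 0 := by
    intro j; simp [hcat, Fin.append_right]
  simp [h1, h2]

theorem accessible_members_of_separated_family_le
    (d m mp k N : ℕ) (hd : 0 < d) (hm : 0 < m) (hmp : 0 < mp) (hk : 0 < k)
    (ε r L : ℝ) (hε : 0 < ε) (hr : 0 < r) (hL : 0 < L) (hεLr : ε ≤ L * r)
    (τ : (Fin d → Fin (mp + m) → ℝ) → (Fin d → Fin (mp + m) → ℝ))
    (hτ : ∀ Z Z', frob (τ Z - τ Z') ≤ L * frob (Z - Z'))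
    (X : Fin k → Fin d → Fin m → ℝ)
    (Y : Fin N → Fin k → Fin d → Fin m → ℝ)
    (hsep : ∀ j j', j ≠ j' → ∃ i, 3 * ε < frob (Y j i - Y j' i)) :
    (Set.ncard {j : Fin N |
        ∃ P : Fin d → Fin mp → ℝ, frob P ≤ r ∧
          ∀ i, frob (lastCols (τ (hcat P (X i))) - Y j i) ≤ ε} : ℝ)
      ≤ (3 * L * r / ε) ^ (d * mp) := by
  classical
  set S : Set (Fin N) := {j : Fin N |
      ∃ P : Fin d → Fin mp → ℝ, frob P ≤ r ∧
        ∀ i, frob (lastCols (τ (hcat P (X i))) - Y j i) ≤ ε} with hS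
  have hfin : S.Finite := Set.toFinite _
  choose P hPr hPy using fun j : S => j.2
  -- separation of prompts
  have key : ∀ j j' : S, (j : Fin N) ≠ (j' : Fin N) →
      ε / L ≤ ‖toE (P j) - toE (P j')‖ := by
    intro j j' hjj
    obtain ⟨i, hi⟩ := hsep j j' hjj
    have t1 : frob (lastCols (τ (hcat (P j) (X i))) - Y j i) ≤ ε := hPy j i
    have t2 : frob (lastCols (τ (hcat (P j') (X i))) - Y j' i) ≤ ε := hPy j' i
    have t3 : frob (lastCols (τ (hcat (P j) (X i))) - lastCols (τ (hcat (P j') (X i))))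
        ≤ L * frob (P j - P j') := by
      have e : lastCols (τ (hcat (P j) (X i))) - lastCols (τ (hcat (P j') (X i)))
          = lastCols (τ (hcat (P j) (X i)) - τ (hcat (P j') (X i))) := rfl
      rw [e]
      calc frob (lastCols (τ (hcat (P j) (X i)) - τ (hcat (P j') (X i))))
          ≤ frob (τ (hcat (P j) (X i)) - τ (hcat (P j') (X i))) := frob_lastCols_le _
        _ ≤ L * frob (hcat (P j) (X i) - hcat (P j') (X i)) := hτ _ _
        _ = L * frob (P j - P j') := by rw [frob_hcat_sub]
    have tri : frob (Y j i - Y j' i) ≤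
        frob (lastCols (τ (hcat (P j) (X i))) - Y j i)
        + frob (lastCols (τ (hcat (P j) (X i))) - lastCols (τ (hcat (P j') (X i))))
        + frob (lastCols (τ (hcat (P j') (X i))) - Y j' i) := by
      simp only [frob_sub_eq]
      rw [norm_sub_rev (toE (lastCols (τ (hcat (P j) (X i))))) (toE (Y j i))]
      have := norm_sub_le_norm_sub_add_norm_sub (toE (Y j i))
        (toE (lastCols (τ (hcat (P j) (X i))))) (toE (Y j' i))
      calc ‖toE (Y j i) - toE (Y j' i)‖
          ≤ ‖toE (Y j i) - toE (lastCols (τ (hcat (P j) (X i))))‖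
            + ‖toE (lastCols (τ (hcat (P j) (X i)))) - toE (Y j' i)‖ := this
        _ ≤ _ := by
            have := norm_sub_le_norm_sub_add_norm_sub
              (toE (lastCols (τ (hcat (P j) (X i)))))
              (toE (lastCols (τ (hcat (P j') (X i))))) (toE (Y j' i))
            linarith
    have hfr : ε < L * frob (P j - P j') := by linarith
    rw [frob_sub_eq] at hfr
    rw [div_le_iff₀' hL]
    linarith
  -- build the finset of prompt points
  let s₀ : Finset (Fin N) := hfin.toFinset
  let f : {x // x ∈ s₀} → EuclideanSpace ℝ (Fin d × Fin mp) :=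
    fun j => toE (P ⟨j.1, hfin.mem_toFinset.mp j.2⟩)
  have finj : Function.Injective f := by
    intro a b hab
    by_contra hne
    have hne' : (a.1 : Fin N) ≠ b.1 := fun h => hne (Subtype.ext h)
    have := key ⟨a.1, hfin.mem_toFinset.mp a.2⟩ ⟨b.1, hfin.mem_toFinset.mp b.2⟩ hne'
    rw [show toE (P ⟨a.1, hfin.mem_toFinset.mp a.2⟩) = f a from rfl,
      show toE (P ⟨b.1, hfin.mem_toFinset.mp b.2⟩) = f b from rfl, hab, sub_self,
      norm_zero] at this
    have : (0:ℝ) < ε / L := by positivity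
    linarith
  let t : Finset (EuclideanSpace ℝ (Fin d × Fin mp)) := s₀.attach.image f
  have hcard : t.card = s₀.card := by
    rw [Finset.card_image_of_injective _ finj, Finset.card_attach]
  have hδ : (0:ℝ) < ε / L := by positivity
  have hbound : (t.card : ℝ) ≤ ((2 * r + ε / L) / (ε / L)) ^ finrank ℝ (EuclideanSpace ℝ (Fin d × Fin mp)) := by
    apply my_card_le_of_separated t hδ hr.le
    · intro c hc
      obtain ⟨j, _, rfl⟩ := Finset.mem_image.mp hc
      rw [← frob_eq_norm]
      exact hPr _
    · intro c hc e he hce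
      obtain ⟨j, _, rfl⟩ := Finset.mem_image.mp hc
      obtain ⟨j', _, rfl⟩ := Finset.mem_image.mp he
      have hjj : (j.1 : Fin N) ≠ j'.1 := by
        intro h
        exact hce (congrArg f (Subtype.ext h))
      exact key _ _ hjj
  have hrank : finrank ℝ (EuclideanSpace ℝ (Fin d × Fin mp)) = d * mp := by
    rw [finrank_euclideanSpace]
    simp
  rw [hrank] at hbound
  have hncard : (S.ncard : ℝ) = (t.card : ℝ) := by
    rw [hcard, Set.ncard_eq_toFinset_card' S]
    norm_cast
    rw [Set.toFinset_card]
    exact (Set.Finite.card_toFinset hfin).symm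
  have hbase : (2 * r + ε / L) / (ε / L) ≤ 3 * L * r / ε := by
    have e1 : (2 * r + ε / L) / (ε / L) = 2 * L * r / ε + 1 := by
      field_simp
    have e2 : (1:ℝ) ≤ L * r / ε := (one_le_div hε).mpr hεLr
    have e3 : 3 * L * r / ε = 2 * L * r / ε + L * r / ε := by ring
    rw [e1, e3]
    linarith
  calc (S.ncard : ℝ) = (t.card : ℝ) := hncard
    _ ≤ ((2 * r + ε / L) / (ε / L)) ^ (d * mp) := hbound
    _ ≤ (3 * L * r / ε) ^ (d * mp) := by
        apply pow_le_pow_left₀ (by positivity) hbase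
end

section
/- Let d and h be positive integers. For each i ∈ {1,…,h+1} and k ∈ {1,…,h}, let a_i^k ∈ ℝ^d. Let y_1, …, y_{h+1} ∈ ℝ^d be nonzero vectors that are pairwise orthogonal and orthogonal to every a_i^k (i ∈ {1,…,h+1}, k ∈ {1,…,h}). Then there do not exist vectors b^1, …, b^h ∈ ℝ^d and scalars λ_i^k ∈ (0,1) for i ∈ {1,…,h+1}, k ∈ {1,…,h}, such that y_i = Σ_{k=1}^h ( λ_i^k · a_i^k + (1 − λ_i^k) · b^k ) for every i ∈ {1,…,h+1}. -/
/-- Abstract core of the paper's Lemma 1 (Appendix E): nonzero pairwise-orthogonal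
targets `y i`, orthogonal to all the `a i k`, cannot all be written as
`y i = ∑ k (λ i k • a i k + (1 - λ i k) • b k)` with `λ i k ∈ (0, 1)`. -/
theorem no_exact_convex_decomposition
    (d h : ℕ) (hd : 0 < d) (hh : 0 < h)
    (a : Fin (h + 1) → Fin h → EuclideanSpace ℝ (Fin d))
    (y : Fin (h + 1) → EuclideanSpace ℝ (Fin d))
    (hy0 : ∀ i, y i ≠ 0)
    (hyy : ∀ i j, i ≠ j → inner ℝ (y i) (y j) = (0 : ℝ))
    (hya : ∀ i i' k, inner ℝ (y i) (a i' k) = (0 : ℝ)) :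
    ¬ ∃ (b : Fin h → EuclideanSpace ℝ (Fin d)) (lam : Fin (h + 1) → Fin h → ℝ),
        (∀ i k, lam i k ∈ Set.Ioo (0 : ℝ) 1) ∧
        ∀ i, y i = ∑ k, (lam i k • a i k + (1 - lam i k) • b k) := by
  rintro ⟨b, lam, hlam, heq⟩
  -- key biorthogonality identity
  have key : ∀ i j, ∑ k, (1 - lam i k) * inner ℝ (y j) (b k) = (inner ℝ (y j) (y i) : ℝ) := by
    intro i j
    conv_rhs => rw [heq i]
    rw [inner_sum]
    refine Finset.sum_congr rfl fun k _ => ?_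
    rw [inner_add_right, inner_smul_right, inner_smul_right, hya, mul_zero, zero_add]
  set c : Fin (h + 1) → (Fin h → ℝ) := fun i k => inner ℝ (y i) (b k) with hc
  have hli : LinearIndependent ℝ c := by
    rw [Fintype.linearIndependent_iff]
    intro g hg j
    have hk : ∀ k, ∑ i, g i * c i k = 0 := by
      intro k
      have := congrFun hg k
      simpa using this
    have h1 : ∑ k, (1 - lam j k) * ∑ i, g i * c i k = 0 := by
      simp [hk]
    have h2 : ∑ k, (1 - lam j k) * ∑ i, g i * c i k
        = ∑ i, g i * ∑ k, (1 - lam j k) * c i k := by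
      simp_rw [Finset.mul_sum]
      rw [Finset.sum_comm]
      exact Finset.sum_congr rfl fun i _ => Finset.sum_congr rfl fun k _ => by ring
    have h3 : ∀ i, (∑ k, (1 - lam j k) * c i k) = (inner ℝ (y i) (y j) : ℝ) := fun i => key j i
    have h4 : ∑ i, g i * (inner ℝ (y i) (y j) : ℝ) = g j * (inner ℝ (y j) (y j) : ℝ) := by
      rw [Finset.sum_eq_single j]
      · intro i _ hij
        rw [hyy i j hij, mul_zero]
      · intro hj; exact absurd (Finset.mem_univ j) hj
    have h5 : g j * (inner ℝ (y j) (y j) : ℝ) = 0 := by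
      rw [← h4]
      rw [← h1, h2]
      exact Finset.sum_congr rfl fun i _ => by rw [h3]
    rcases mul_eq_zero.mp h5 with h | h
    · exact h
    · exact absurd (inner_self_eq_zero.mp h) (hy0 j)
  have hcard := hli.fintype_card_le_finrank
  simp [Module.finrank_pi] at hcard
end

section
/- Let d be a positive integer and let a_1, a_2, y_1, y_2 ∈ ℝ^d with y_1 ≠ 0, y_2 ≠ 0, ⟨y_1, y_2⟩ = 0, and ⟨y_i, a_j⟩ = 0 for all i, j ∈ {1,2}. Set r = min(‖y_1‖₂, ‖y_2‖₂). Then for every b ∈ ℝ^d, every λ_1, λ_2 ∈ (0,1), and every ε ≥ 0: if ‖y_i − λ_i·a_i − (1−λ_i)·b‖₂ ≤ ε for both i = 1 and i = 2, then ε ≥ r/2. Equivalently, max_{i∈{1,2}} ‖y_i − λ_i·a_i − (1−λ_i)·b‖₂ ≥ r/2. -/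
/-- Abstract form of the paper's Lemma 2 (Appendix F): two nonzero orthogonal targets
`y₁, y₂` that are orthogonal to `a₁` and `a₂` cannot both be `ε`-approximated by
`λᵢ • aᵢ + (1 - λᵢ) • b` with `λᵢ ∈ (0,1)` unless `ε ≥ min(‖y₁‖, ‖y₂‖) / 2`. -/
theorem approx_convex_decomposition_error_lower_bound
    (d : ℕ) (hd : 0 < d)
    (a₁ a₂ y₁ y₂ : EuclideanSpace ℝ (Fin d))
    (hy₁ : y₁ ≠ 0) (hy₂ : y₂ ≠ 0)
    (hyy : inner ℝ y₁ y₂ = (0 : ℝ))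
    (h11 : inner ℝ y₁ a₁ = (0 : ℝ)) (h12 : inner ℝ y₁ a₂ = (0 : ℝ))
    (h21 : inner ℝ y₂ a₁ = (0 : ℝ)) (h22 : inner ℝ y₂ a₂ = (0 : ℝ))
    (b : EuclideanSpace ℝ (Fin d)) (lam₁ lam₂ : ℝ)
    (hl₁ : lam₁ ∈ Set.Ioo (0 : ℝ) 1) (hl₂ : lam₂ ∈ Set.Ioo (0 : ℝ) 1)
    (ε : ℝ) (hε : 0 ≤ ε)
    (h1 : ‖y₁ - lam₁ • a₁ - (1 - lam₁) • b‖ ≤ ε)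
    (h2 : ‖y₂ - lam₂ • a₂ - (1 - lam₂) • b‖ ≤ ε) :
    min ‖y₁‖ ‖y₂‖ / 2 ≤ ε := by
  by_contra hcon
  push_neg at hcon
  obtain ⟨hl1a, hl1b⟩ := hl₁
  obtain ⟨hl2a, hl2b⟩ := hl₂
  have hn1 : (0:ℝ) < ‖y₁‖ := norm_pos_iff.mpr hy₁
  have hn2 : (0:ℝ) < ‖y₂‖ := norm_pos_iff.mpr hy₂
  have he1 : ε < ‖y₁‖ / 2 := lt_of_lt_of_le hcon (by
    have := min_le_left ‖y₁‖ ‖y₂‖; linarith)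
  have he2 : ε < ‖y₂‖ / 2 := lt_of_lt_of_le hcon (by
    have := min_le_right ‖y₂‖ ‖y₂‖
    have := min_le_right ‖y₁‖ ‖y₂‖; linarith)
  set u : ℝ := inner ℝ y₁ b with hu
  set v : ℝ := inner ℝ y₂ b with hv
  have hyy' : inner ℝ y₂ y₁ = (0:ℝ) := by
    rw [real_inner_comm]; exact hyy
  have e11 : inner ℝ y₁ (y₁ - lam₁ • a₁ - (1 - lam₁) • b) = ‖y₁‖^2 - (1 - lam₁) * u := by
    rw [inner_sub_right, inner_sub_right, real_inner_smul_right, real_inner_smul_right,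
      h11, real_inner_self_eq_norm_sq, ← hu]; ring
  have e12 : inner ℝ y₂ (y₁ - lam₁ • a₁ - (1 - lam₁) • b) = -((1 - lam₁) * v) := by
    rw [inner_sub_right, inner_sub_right, real_inner_smul_right, real_inner_smul_right,
      h21, hyy', ← hv]; ring
  have e21 : inner ℝ y₂ (y₂ - lam₂ • a₂ - (1 - lam₂) • b) = ‖y₂‖^2 - (1 - lam₂) * v := by
    rw [inner_sub_right, inner_sub_right, real_inner_smul_right, real_inner_smul_right,
      h22, real_inner_self_eq_norm_sq, ← hv]; ring
  have e22 : inner ℝ y₁ (y₂ - lam₂ • a₂ - (1 - lam₂) • b) = -((1 - lam₂) * u) := by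
    rw [inner_sub_right, inner_sub_right, real_inner_smul_right, real_inner_smul_right,
      h12, hyy, ← hu]; ring
  have b11 : |‖y₁‖^2 - (1 - lam₁) * u| ≤ ‖y₁‖ * ε := by
    rw [← e11]
    exact (abs_real_inner_le_norm _ _).trans
      (mul_le_mul_of_nonneg_left h1 (norm_nonneg _))
  have b12 : |(1 - lam₁) * v| ≤ ‖y₂‖ * ε := by
    have := (abs_real_inner_le_norm y₂ (y₁ - lam₁ • a₁ - (1 - lam₁) • b)).trans
      (mul_le_mul_of_nonneg_left h1 (norm_nonneg _))
    rwa [e12, abs_neg] at this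
  have b21 : |‖y₂‖^2 - (1 - lam₂) * v| ≤ ‖y₂‖ * ε := by
    rw [← e21]
    exact (abs_real_inner_le_norm _ _).trans
      (mul_le_mul_of_nonneg_left h2 (norm_nonneg _))
  have b22 : |(1 - lam₂) * u| ≤ ‖y₁‖ * ε := by
    have := (abs_real_inner_le_norm y₁ (y₂ - lam₂ • a₂ - (1 - lam₂) • b)).trans
      (mul_le_mul_of_nonneg_left h2 (norm_nonneg _))
    rwa [e22, abs_neg] at this
  rw [abs_le] at b11 b12 b21 b22
  clear_value u v
  clear hu hv e11 e12 e21 e22 h1 h2 hyy hyy' h11 h12 h21 h22 hy₁ hy₂ a₁ a₂ b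
  -- (1-lam₁)u > ‖y₁‖²/2, (1-lam₂)u ≤ ‖y₁‖ε < ‖y₁‖²/2, similarly with v swapped
  have ht1 : (0:ℝ) < 1 - lam₁ := by linarith
  have ht2 : (0:ℝ) < 1 - lam₂ := by linarith
  have hA : (1 - lam₁) * u > ‖y₁‖^2 / 2 := by nlinarith [b11.2, sq_nonneg ‖y₁‖]
  have hB : (1 - lam₂) * u < ‖y₁‖^2 / 2 := by nlinarith [b22.2]
  have hC : (1 - lam₂) * v > ‖y₂‖^2 / 2 := by nlinarith [b21.2]
  have hD : (1 - lam₁) * v < ‖y₂‖^2 / 2 := by nlinarith [b12.2]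
  have hsq1 : (0:ℝ) < ‖y₁‖^2 := pow_pos hn1 2
  have hsq2 : (0:ℝ) < ‖y₂‖^2 := pow_pos hn2 2
  have hupos : 0 < u := by
    by_contra h
    push_neg at h
    have := mul_nonpos_of_nonneg_of_nonpos ht1.le h
    linarith
  have hvpos : 0 < v := by
    by_contra h
    push_neg at h
    have := mul_nonpos_of_nonneg_of_nonpos ht2.le h
    linarith
  have h12' : 1 - lam₂ < 1 - lam₁ := by
    by_contra h
    push_neg at h
    have := mul_le_mul_of_nonneg_right h hupos.le
    linarith
  have h21' : 1 - lam₁ < 1 - lam₂ := by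
    by_contra h
    push_neg at h
    have := mul_le_mul_of_nonneg_right h hvpos.le
    linarith
  linarith
end

section
/- Let d and d_ff be positive integers, W_1 ∈ ℝ^{d_ff×d}, W_2 ∈ ℝ^{d×d_ff}, b_1 ∈ ℝ^{d_ff}, b_2 ∈ ℝ^d, and suppose c := ‖W_1‖₂·‖W_2‖₂ < 1, where ‖·‖₂ denotes the spectral norm. Then the map g : ℝ^d → ℝ^d defined by g(x) = W_2 ReLU(W_1 x + b_1) + b_2 + x is a bijection, and ‖g(x) − g(x')‖₂ ≥ (1 − c)·‖x − x'‖₂ for all x, x' ∈ ℝ^d; equivalently, the inverse map g⁻¹ is Lipschitz with constant 1/(1 − c). -/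
/-- Euclidean norm of a real vector. -/
noncomputable def eucNorm {n : ℕ} (v : Fin n → ℝ) : ℝ :=
  Real.sqrt (∑ i, v i ^ 2)

/-- Spectral (ℓ²-operator) norm of a real matrix. -/
noncomputable def specNorm {a b : ℕ} (W : Matrix (Fin a) (Fin b) ℝ) : ℝ :=
  sSup {c : ℝ | ∃ x : Fin b → ℝ, eucNorm x ≤ 1 ∧ c = eucNorm (W.mulVec x)}

lemma eucNorm_eq {n : ℕ} (v : Fin n → ℝ) :
    eucNorm v = ‖(WithLp.equiv 2 (Fin n → ℝ)).symm v‖ := by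
  simp [eucNorm, EuclideanSpace.norm_eq, sq_abs]

lemma eucNorm_nonneg {n : ℕ} (v : Fin n → ℝ) : 0 ≤ eucNorm v := Real.sqrt_nonneg _

lemma eucNorm_zero {n : ℕ} : eucNorm (0 : Fin n → ℝ) = 0 := by
  simp [eucNorm_eq]

lemma eucNorm_eq_zero {n : ℕ} {v : Fin n → ℝ} (h : eucNorm v = 0) : v = 0 := by
  rw [eucNorm_eq] at h
  have := norm_eq_zero.mp h
  have : (WithLp.equiv 2 (Fin n → ℝ)) ((WithLp.equiv 2 (Fin n → ℝ)).symm v) = 0 := by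
    rw [this]; simp
  simpa using this

lemma eucNorm_smul {n : ℕ} (c : ℝ) (v : Fin n → ℝ) : eucNorm (c • v) = |c| * eucNorm v := by
  rw [eucNorm_eq, eucNorm_eq]; simp [norm_smul]

noncomputable def specCLM {a b : ℕ} (W : Matrix (Fin a) (Fin b) ℝ) :
    EuclideanSpace ℝ (Fin b) →L[ℝ] EuclideanSpace ℝ (Fin a) :=
  LinearMap.toContinuousLinearMap (Matrix.toEuclideanLin W)

lemma specSet_bdd {a b : ℕ} (W : Matrix (Fin a) (Fin b) ℝ) :
    BddAbove {c : ℝ | ∃ x : Fin b → ℝ, eucNorm x ≤ 1 ∧ c = eucNorm (W.mulVec x)} := by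
  refine ⟨‖specCLM W‖, ?_⟩
  rintro c ⟨x, hx, rfl⟩
  have h1 : eucNorm (W.mulVec x) = ‖specCLM W ((WithLp.equiv 2 (Fin b → ℝ)).symm x)‖ := by
    rw [eucNorm_eq]
    congr 1
  rw [h1]
  calc ‖specCLM W ((WithLp.equiv 2 (Fin b → ℝ)).symm x)‖
      ≤ ‖specCLM W‖ * ‖(WithLp.equiv 2 (Fin b → ℝ)).symm x‖ := (specCLM W).le_opNorm _
    _ ≤ ‖specCLM W‖ * 1 := by
        apply mul_le_mul_of_nonneg_left _ (norm_nonneg _)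
        rw [← eucNorm_eq]; exact hx
    _ = ‖specCLM W‖ := mul_one _

lemma specNorm_nonneg {a b : ℕ} (W : Matrix (Fin a) (Fin b) ℝ) : 0 ≤ specNorm W := by
  apply le_csSup (specSet_bdd W)
  exact ⟨0, by simp [eucNorm_zero], by simp [Matrix.mulVec_zero, eucNorm_zero]⟩

lemma eucNorm_mulVec_le {a b : ℕ} (W : Matrix (Fin a) (Fin b) ℝ) (x : Fin b → ℝ) :
    eucNorm (W.mulVec x) ≤ specNorm W * eucNorm x := by
  rcases eq_or_ne (eucNorm x) 0 with h | h
  · rw [eucNorm_eq_zero h]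
    simp [Matrix.mulVec_zero, eucNorm_zero, h]
  · have hpos : 0 < eucNorm x := lt_of_le_of_ne (eucNorm_nonneg x) (Ne.symm h)
    set u := (eucNorm x)⁻¹ • x with hu
    have hnu : eucNorm u = 1 := by
      rw [hu, eucNorm_smul, abs_of_nonneg (inv_nonneg.mpr hpos.le), inv_mul_cancel₀ h]
    have hmem : eucNorm (W.mulVec u) ≤ specNorm W :=
      le_csSup (specSet_bdd W) ⟨u, hnu.le, rfl⟩
    have hWu : W.mulVec u = (eucNorm x)⁻¹ • W.mulVec x := by
      rw [hu, Matrix.mulVec_smul]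
    rw [hWu, eucNorm_smul, abs_of_nonneg (inv_nonneg.mpr hpos.le)] at hmem
    calc eucNorm (W.mulVec x) = eucNorm x * ((eucNorm x)⁻¹ * eucNorm (W.mulVec x)) := by
          field_simp
      _ ≤ eucNorm x * specNorm W := mul_le_mul_of_nonneg_left hmem hpos.le
      _ = specNorm W * eucNorm x := mul_comm _ _

lemma eucNorm_relu_sub {n : ℕ} (u v : Fin n → ℝ) :
    eucNorm ((fun i => max (u i) 0) - fun i => max (v i) 0) ≤ eucNorm (u - v) := by
  unfold eucNorm
  apply Real.sqrt_le_sqrt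
  apply Finset.sum_le_sum
  intro i _
  have h := abs_max_sub_max_le_abs (u i) (v i) 0
  calc ((fun i => max (u i) 0) - fun i => max (v i) 0) i ^ 2
      = |max (u i) 0 - max (v i) 0| ^ 2 := by rw [sq_abs]; rfl
    _ ≤ |u i - v i| ^ 2 := by
        apply pow_le_pow_left₀ (abs_nonneg _) h
    _ = (u - v) i ^ 2 := by rw [sq_abs]; rfl

lemma eucNorm_triangle {n : ℕ} (u v : Fin n → ℝ) :
    eucNorm (u + v) ≤ eucNorm u + eucNorm v := by
  simp only [eucNorm_eq]
  rw [show (WithLp.equiv 2 (Fin n → ℝ)).symm (u + v)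
      = (WithLp.equiv 2 (Fin n → ℝ)).symm u + (WithLp.equiv 2 (Fin n → ℝ)).symm v by simp]
  exact norm_add_le _ _

lemma eucNorm_neg {n : ℕ} (v : Fin n → ℝ) : eucNorm (-v) = eucNorm v := by
  have := eucNorm_smul (-1 : ℝ) v
  simpa using this

/-- The residual MLP layer `g(x) = W₂ ReLU(W₁ x + b₁) + b₂ + x` with
`c = ‖W₁‖₂ ‖W₂‖₂ < 1` is a bijection whose inverse is `1/(1-c)`-Lipschitz, i.e.
`‖g(x) - g(x')‖₂ ≥ (1 - c) ‖x - x'‖₂`. -/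
theorem residual_mlp_bijective_and_inverse_lipschitz
    (d dff : ℕ) (hd : 0 < d) (hdff : 0 < dff)
    (W1 : Matrix (Fin dff) (Fin d) ℝ) (W2 : Matrix (Fin d) (Fin dff) ℝ)
    (b1 : Fin dff → ℝ) (b2 : Fin d → ℝ)
    (hc : specNorm W1 * specNorm W2 < 1)
    (g : (Fin d → ℝ) → (Fin d → ℝ))
    (hg : ∀ x, g x = W2.mulVec (fun i => max (W1.mulVec x i + b1 i) 0) + b2 + x) :
    Function.Bijective g ∧
      ∀ x x', (1 - specNorm W1 * specNorm W2) * eucNorm (x - x')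
        ≤ eucNorm (g x - g x') := by
  set c : ℝ := specNorm W1 * specNorm W2 with hcdef
  have hc0 : 0 ≤ c := mul_nonneg (specNorm_nonneg W1) (specNorm_nonneg W2)
  set F : (Fin d → ℝ) → (Fin d → ℝ) :=
    fun x => W2.mulVec (fun i => max (W1.mulVec x i + b1 i) 0) with hF
  -- F is c-Lipschitz in eucNorm
  have hFlip : ∀ x x', eucNorm (F x - F x') ≤ c * eucNorm (x - x') := by
    intro x x'
    have h1 : F x - F x' = W2.mulVec
        ((fun i => max ((W1.mulVec x + b1) i) 0) - fun i => max ((W1.mulVec x' + b1) i) 0) := by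
      rw [hF]
      simp only [Matrix.mulVec_sub]
      rfl
    rw [h1]
    calc eucNorm (W2.mulVec _)
        ≤ specNorm W2 * eucNorm ((fun i => max ((W1.mulVec x + b1) i) 0)
            - fun i => max ((W1.mulVec x' + b1) i) 0) := eucNorm_mulVec_le _ _
      _ ≤ specNorm W2 * eucNorm ((W1.mulVec x + b1) - (W1.mulVec x' + b1)) := by
          apply mul_le_mul_of_nonneg_left (eucNorm_relu_sub _ _) (specNorm_nonneg W2)
      _ = specNorm W2 * eucNorm (W1.mulVec (x - x')) := by
          congr 1
          rw [Matrix.mulVec_sub]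
          congr 1
          abel
      _ ≤ specNorm W2 * (specNorm W1 * eucNorm (x - x')) := by
          apply mul_le_mul_of_nonneg_left (eucNorm_mulVec_le _ _) (specNorm_nonneg W2)
      _ = c * eucNorm (x - x') := by ring
  -- difference formula
  have hdiff : ∀ x x', g x - g x' = (F x - F x') + (x - x') := by
    intro x x'
    rw [hg, hg, hF]
    abel
  -- lower bound
  have hlow : ∀ x x', (1 - c) * eucNorm (x - x') ≤ eucNorm (g x - g x') := by
    intro x x'
    have h2 : eucNorm (x - x') ≤ eucNorm (g x - g x') + c * eucNorm (x - x') := by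
      have h3 : x - x' = (g x - g x') + (F x' - F x) := by
        rw [hdiff]; abel
      calc eucNorm (x - x') = eucNorm ((g x - g x') + (F x' - F x)) := by rw [← h3]
        _ ≤ eucNorm (g x - g x') + eucNorm (F x' - F x) := eucNorm_triangle _ _
        _ ≤ eucNorm (g x - g x') + c * eucNorm (x' - x) := by
            linarith [hFlip x' x]
        _ = eucNorm (g x - g x') + c * eucNorm (x - x') := by
            rw [show x' - x = -(x - x') by abel, eucNorm_neg]
    nlinarith [eucNorm_nonneg (x - x')]
  refine ⟨⟨?_, ?_⟩, hlow⟩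
  · -- injective
    intro x x' hxx
    have h0 : eucNorm (g x - g x') = 0 := by rw [hxx]; simp [eucNorm_zero]
    have := hlow x x'
    rw [h0] at this
    have h1 : eucNorm (x - x') = 0 := by nlinarith [eucNorm_nonneg (x - x')]
    have := eucNorm_eq_zero h1
    exact sub_eq_zero.mp this
  · -- surjective via Banach fixed point
    intro y
    set E := EuclideanSpace ℝ (Fin d)
    set e := WithLp.equiv 2 (Fin d → ℝ)
    set h : E → E := fun z => e.symm (y - b2 - F (e z)) with hh
    have hK : ContractingWith ⟨c, hc0⟩ h := by
      constructor
      · exact_mod_cast hc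
      · apply LipschitzWith.of_dist_le_mul
        intro z z'
        have key : ∀ a b : Fin d → ℝ, e.symm a - e.symm b = e.symm (a - b) := by
          intro a b; rfl
        have hd1 : h z - h z' = e.symm (F (e z') - F (e z)) := by
          show e.symm (y - b2 - F (e z)) - e.symm (y - b2 - F (e z')) = _
          rw [key]
          congr 1
          abel
        calc dist (h z) (h z') = ‖h z - h z'‖ := dist_eq_norm _ _
          _ = eucNorm (F (e z') - F (e z)) := by rw [hd1, ← eucNorm_eq]
          _ ≤ c * eucNorm (e z' - e z) := hFlip _ _
          _ = c * dist z z' := by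
              rw [dist_eq_norm]
              congr 1
              rw [eucNorm_eq]
              have : e.symm (e z' - e z) = z' - z := by rw [← key]; simp
              rw [this, norm_sub_rev]
    haveI : Nonempty E := ⟨0⟩
    set z := hK.fixedPoint h with hzdef
    have hz : h z = z := hK.fixedPoint_isFixedPt
    refine ⟨e z, ?_⟩
    have hz' : e.symm (y - b2 - F (e z)) = z := hz
    have : y - b2 - F (e z) = e z := by
      have := congrArg e hz'
      simpa using this
    rw [hg]
    show F (e z) + b2 + e z = y
    set w := e z with hw
    set q := F w with hq
    rw [← this]
    abel
end

section
/- Consider h-head self-attention with head matrices W_q^i, W_k^i ∈ ℝ^{s×d}, W_v^i ∈ ℝ^{s'×d}, W_o^i ∈ ℝ^{d×s'}, where Att(x,X) = Σ_{i=1}^h Σ_{j=1}^m σ((W_k^i X)^T W_q^i x)_j · W_o^i W_v^i X_{:,j} with σ the softmax, and for a compactly supported probability measure μ on ℝ^d define Γ_μ(x) = Σ_{i=1}^h ( ∫ W_o^i W_v^i y · exp((W_k^i y)^T W_q^i x) dμ(y) ) / ( ∫ exp((W_k^i y)^T W_q^i x) dμ(y) ). For X ∈ ℝ^{d×m}, let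 M(X) = (1/m) Σ_{j=1}^m δ_{X_{:,j}} be the empirical measure of its columns. Then the pushforward measure (Γ_{M(X)})_♯ M(X) equals the empirical measure (1/m) Σ_{l=1}^m δ_{Att(X_{:,l}, X)} of the columns of the self-attention output; that is, mean-field self-attention generalizes discrete self-attention: F(M(X)) = M(Att(X, X)) where F(μ) = (Γ_μ)_♯ μ. -/
open MeasureTheory

/-- Softmax of a real vector. -/
noncomputable def softmax {n : ℕ} (z : Fin n → ℝ) : Fin n → ℝ :=
  fun j => Real.exp (z j) / ∑ l, Real.exp (z l)

/-- The attention of a query `x` within a context `X` for a single head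
with matrices `WQ, WK, WV, WO`. -/
noncomputable def headAtt {s s' d m : ℕ}
    (WQ WK : Matrix (Fin s) (Fin d) ℝ) (WV : Matrix (Fin s') (Fin d) ℝ)
    (WO : Matrix (Fin d) (Fin s') ℝ)
    (x : Fin d → ℝ) (X : Matrix (Fin d) (Fin m) ℝ) : Fin d → ℝ :=
  ∑ j, softmax (fun j' => dotProduct (WK.mulVec fun i => X i j') (WQ.mulVec x)) j •
    WO.mulVec (WV.mulVec fun i => X i j)

/-- The empirical measure `M(X) = (1/m) ∑ⱼ δ_{X_{:,j}}` of the columns of `X`. -/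
noncomputable def empMeasure {d m : ℕ} (X : Matrix (Fin d) (Fin m) ℝ) :
    Measure (Fin d → ℝ) :=
  (m : ENNReal)⁻¹ • ∑ j : Fin m, Measure.dirac (fun i => X i j)

/-- Mean-field `h`-head self-attention map `Γ_μ`. -/
noncomputable def Gamma {h s s' d : ℕ}
    (WQ WK : Fin h → Matrix (Fin s) (Fin d) ℝ)
    (WV : Fin h → Matrix (Fin s') (Fin d) ℝ)
    (WO : Fin h → Matrix (Fin d) (Fin s') ℝ)
    (μ : Measure (Fin d → ℝ)) (x : Fin d → ℝ) : Fin d → ℝ :=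
  ∑ i, (∫ y, Real.exp (dotProduct ((WK i).mulVec y) ((WQ i).mulVec x)) ∂μ)⁻¹ •
      ∫ y, Real.exp (dotProduct ((WK i).mulVec y) ((WQ i).mulVec x)) •
        (WO i).mulVec ((WV i).mulVec y) ∂μ

/-- Any function is integrable with respect to a Dirac measure. -/
lemma integrable_dirac' {α E : Type*} [MeasurableSpace α] [MeasurableSingletonClass α]
    [NormedAddCommGroup E] (f : α → E) (a : α) :
    Integrable f (Measure.dirac a) :=
  (integrable_const (f a)).congr (ae_eq_dirac f).symm

/-- Integration against the empirical measure is an average. -/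
lemma integral_empMeasure {d m : ℕ} {E : Type*} [NormedAddCommGroup E]
    [NormedSpace ℝ E] [CompleteSpace E] (X : Matrix (Fin d) (Fin m) ℝ) (f : (Fin d → ℝ) → E) :
    ∫ y, f y ∂(empMeasure X) = (m : ℝ)⁻¹ • ∑ j : Fin m, f (fun i => X i j) := by
  rw [empMeasure, integral_smul_measure,
    integral_finset_sum_measure (fun j _ => integrable_dirac' f _)]
  simp only [ENNReal.toReal_inv, ENNReal.toReal_natCast]
  exact congrArg _ (Finset.sum_congr rfl fun j _ => integral_dirac f _)

/-- Pointwise identification of the mean-field map with discrete attention. -/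
lemma gamma_empMeasure_eq {h s s' d m : ℕ} (hm : 0 < m)
    (WQ WK : Fin h → Matrix (Fin s) (Fin d) ℝ)
    (WV : Fin h → Matrix (Fin s') (Fin d) ℝ)
    (WO : Fin h → Matrix (Fin d) (Fin s') ℝ)
    (X : Matrix (Fin d) (Fin m) ℝ) (x : Fin d → ℝ) :
    Gamma WQ WK WV WO (empMeasure X) x
      = ∑ i, headAtt (WQ i) (WK i) (WV i) (WO i) x X := by
  unfold Gamma headAtt softmax
  refine Finset.sum_congr rfl fun i _ => ?_
  rw [integral_empMeasure, integral_empMeasure]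
  set S : ℝ := ∑ j : Fin m, Real.exp
    (dotProduct ((WK i).mulVec fun r => X r j) ((WQ i).mulVec x)) with hS
  have hSpos : 0 < S := Finset.sum_pos (fun j _ => Real.exp_pos _) ⟨⟨0, hm⟩, Finset.mem_univ _⟩
  have hmpos : (0:ℝ) < (m:ℝ) := by exact_mod_cast hm
  rw [smul_eq_mul, mul_inv, smul_smul]
  have : ((m:ℝ)⁻¹)⁻¹ * S⁻¹ * (m:ℝ)⁻¹ = S⁻¹ := by
    field_simp
  rw [this, Finset.smul_sum]
  refine Finset.sum_congr rfl fun j _ => ?_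
  rw [smul_smul, div_eq_inv_mul]


lemma measurable_matdot {s d : ℕ} (A : Matrix (Fin s) (Fin d) ℝ) (c : Fin s → ℝ) :
    Measurable (fun x : Fin d → ℝ => dotProduct c (A.mulVec x)) := by
  unfold dotProduct Matrix.mulVec
  refine Finset.measurable_sum _ fun k _ => Measurable.const_mul ?_ _
  exact Finset.measurable_sum _ fun l _ => (measurable_pi_apply l).const_mul _

lemma measurable_headAtt {s s' d m : ℕ}
    (WQ WK : Matrix (Fin s) (Fin d) ℝ) (WV : Matrix (Fin s') (Fin d) ℝ)
    (WO : Matrix (Fin d) (Fin s') ℝ) (X : Matrix (Fin d) (Fin m) ℝ) :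
    Measurable (fun x => headAtt WQ WK WV WO x X) := by
  unfold headAtt softmax
  refine measurable_pi_lambda _ fun r => ?_
  simp only [Finset.sum_apply, Pi.smul_apply, smul_eq_mul]
  refine Finset.measurable_sum _ fun j _ => Measurable.mul ?_ measurable_const
  exact (Real.measurable_exp.comp (measurable_matdot WQ _)).div
    (Finset.measurable_sum _ fun l _ => Real.measurable_exp.comp (measurable_matdot WQ _))

lemma indicator_preimage_one {α β : Type*} (f : α → β) (t : Set β) (a : α) :
    (f ⁻¹' t).indicator (1 : α → ENNReal) a = t.indicator 1 (f a) := by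
  by_cases h : f a ∈ t <;> simp [Set.indicator_apply, Set.mem_preimage, h]

/-- Mean-field self-attention generalizes discrete self-attention:
`F(M(X)) = M(Att(X, X))`, i.e. the pushforward of the empirical measure of the columns
of `X` by `Γ_{M(X)}` is the empirical measure of the columns of the attention output. -/
theorem meanfield_attention_generalizes_discrete
    {h s s' d m : ℕ} (hh : 0 < h) (hm : 0 < m)
    (WQ WK : Fin h → Matrix (Fin s) (Fin d) ℝ)
    (WV : Fin h → Matrix (Fin s') (Fin d) ℝ)
    (WO : Fin h → Matrix (Fin d) (Fin s') ℝ)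
    (X : Matrix (Fin d) (Fin m) ℝ) :
    (empMeasure X).map (Gamma WQ WK WV WO (empMeasure X))
      = empMeasure (Matrix.of fun r l =>
          (∑ i, headAtt (WQ i) (WK i) (WV i) (WO i) (fun r' => X r' l) X) r) := by
  have hG : Gamma WQ WK WV WO (empMeasure X)
      = fun x => ∑ i, headAtt (WQ i) (WK i) (WV i) (WO i) x X :=
    funext (gamma_empMeasure_eq hm WQ WK WV WO X)
  have hmeas : Measurable (Gamma WQ WK WV WO (empMeasure X)) := by
    rw [hG]
    exact Finset.measurable_sum _ fun i _ => measurable_headAtt _ _ _ _ _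
  have hmeas' : Measurable fun x => ∑ i, headAtt (WQ i) (WK i) (WV i) (WO i) x X :=
    Finset.measurable_sum _ fun i _ => measurable_headAtt _ _ _ _ _
  ext t ht
  rw [Measure.map_apply hmeas ht, hG]
  simp only [empMeasure, Measure.smul_apply, Measure.finset_sum_apply, smul_eq_mul]
  congr 1
  refine Finset.sum_congr rfl fun j _ => ?_
  rw [Measure.dirac_apply' _ (hmeas' ht), Measure.dirac_apply' _ ht]
  rw [indicator_preimage_one]
  rfl
end
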